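/- arXiv:1707.01597 — 2 statements merged into one kernel-verified Lean document; each statement's English description precedes it below -/
import Mathlib

section
/- There exists C > 0 such that for all λ ∈ [a₀,b₀] and 0 < |κ| ≤ κ₁: |∂_λG(λ,κ) − ∂_λG₁(λ,κ)| ≤ Cκ²·|Ĝ(λ,κ)|²·|λ − λ_κ^∞|^{α}. -/
/-! Write `ε = λ - λ_κ^∞`. The fixed-point equation gives `D̂ = λ_κ - λ - κ² F(λ_κ^∞, κ)`, so
`D̂ - D` and `D̂ - D₁` are `κ²` times increments of `F` along `[λ_κ^∞, λ]`; by the contraction bound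
both have norm at most `(1 - δ₁)|ε| ≤ (1 - δ₁)|D̂|`, hence `|D|, |D₁| ≥ δ₁ |D̂|`. Now
`∂G = (1 + κ² F'(λ)) / D²` and `∂G₁ = (1 + κ² F'(λ_κ^∞)) / D₁²` differ by a term controlled by the
Hölder bound on `F'` and a term controlled by the Taylor remainder `|D₁ - D| ≤ κ² L |ε|^α |ε|`,
where the extra factor `|ε| ≤ |D̂|` is absorbed by the third power of `D̂` in the denominator. -/

open Filter Set Topology

theorem norm_sub_sub_smul_le_of_holder {E : Type*} [NormedAddCommGroup E] [NormedSpace ℝ E]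
    {f f' : ℝ → E} {x y L α : ℝ} (hL : 0 ≤ L) (hα : 0 ≤ α)
    (hf : ∀ z ∈ uIcc x y, HasDerivWithinAt f (f' z) (uIcc x y) z)
    (hf' : ∀ z ∈ uIcc x y, ‖f' z - f' x‖ ≤ L * |z - x| ^ α) :
    ‖f y - f x - (y - x) • f' x‖ ≤ L * |y - x| ^ α * |y - x| := by
  have hg : ∀ z ∈ uIcc x y, HasDerivWithinAt (fun t => f t - (t - x) • f' x)
      (f' z - f' x) (uIcc x y) z := fun z hz =>
    ((hf z hz).sub (((hasDerivWithinAt_id z _).sub_const x).smul_const (f' x))).congr_deriv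
      (by rw [one_smul])
  have hbound : ∀ z ∈ uIcc x y, ‖f' z - f' x‖ ≤ L * |y - x| ^ α := fun z hz =>
    (hf' z hz).trans (mul_le_mul_of_nonneg_left
      (Real.rpow_le_rpow (abs_nonneg _) (abs_sub_left_of_mem_uIcc hz) hα) hL)
  rw [sub_right_comm]
  simpa only [sub_self, zero_smul, sub_zero, Real.norm_eq_abs] using
    (convex_uIcc x y).norm_image_sub_le_of_norm_hasDerivWithin_le hg hbound left_mem_uIcc
      right_mem_uIcc

theorem mul_norm_le_norm_of_norm_sub_le {E : Type*} [SeminormedAddCommGroup E] {z w : E}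
    {t δ : ℝ} (hδ : δ ≤ 1) (ht : t ≤ ‖z‖) (h : ‖z - w‖ ≤ (1 - δ) * t) : δ * ‖z‖ ≤ ‖w‖ := by
  nlinarith [norm_sub_norm_le z w]

theorem div_sq_sub_div_sq {K : Type*} [Field K] {u v d d₁ : K} (hd : d ≠ 0) (hd₁ : d₁ ≠ 0) :
    u / d ^ 2 - v / d₁ ^ 2
      = (u - v) / d ^ 2 + v * (d₁ - d) * (1 / (d ^ 2 * d₁) + 1 / (d * d₁ ^ 2)) := by
  field_simp
  ring

theorem norm_div_sq_sub_div_sq_le {𝕜 : Type*} [NormedField 𝕜] {u v d d₁ : 𝕜} {p δ B H : ℝ}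
    (hp : 0 < p) (hδ : 0 < δ) (hd : δ * p ≤ ‖d‖) (hd₁ : δ * p ≤ ‖d₁‖)
    (huv : ‖u - v‖ ≤ H) (hv : ‖v‖ ≤ B) (hdd₁ : ‖d₁ - d‖ ≤ H * p) :
    ‖u / d ^ 2 - v / d₁ ^ 2‖ ≤ (1 / δ ^ 2 + 2 * B / δ ^ 3) * H / p ^ 2 := by
  have hδp : 0 < δ * p := mul_pos hδ hp
  have hH : 0 ≤ H := (norm_nonneg _).trans huv
  have hB : 0 ≤ B := (norm_nonneg _).trans hv
  rw [div_sq_sub_div_sq (norm_pos_iff.1 (hδp.trans_le hd)) (norm_pos_iff.1 (hδp.trans_le hd₁))]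
  calc _ ≤ ‖u - v‖ / ‖d‖ ^ 2
        + ‖v‖ * ‖d₁ - d‖ * (1 / (‖d‖ ^ 2 * ‖d₁‖) + 1 / (‖d‖ * ‖d₁‖ ^ 2)) := by
        refine (norm_add_le _ _).trans ?_
        simp only [norm_div, norm_mul, norm_pow]
        gcongr
        exact (norm_add_le _ _).trans_eq (by simp only [norm_div, norm_mul, norm_pow, norm_one])
    _ ≤ H / (δ * p) ^ 2
        + B * (H * p) * (1 / ((δ * p) ^ 2 * (δ * p)) + 1 / ((δ * p) * (δ * p) ^ 2)) := by
        gcongr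
    _ = (1 / δ ^ 2 + 2 * B / δ ^ 3) * H / p ^ 2 := by
        field_simp
        ring

theorem eq_neg_div_sq_of_hasDerivWithinAt_inv {𝕜 𝕜' : Type*} [NontriviallyNormedField 𝕜]
    [NontriviallyNormedField 𝕜'] [NormedAlgebra 𝕜 𝕜'] {D : 𝕜 → 𝕜'} {D' g : 𝕜'} {s : Set 𝕜}
    {x : 𝕜} (hs : s ∈ 𝓝 x) (hD : HasDerivWithinAt D D' s x) (hx : D x ≠ 0)
    (hg : HasDerivWithinAt (fun y => (D y)⁻¹) g s x) : g = -D' / D x ^ 2 :=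
  (hg.hasDerivAt hs).unique ((hD.inv hx).hasDerivAt hs)

section Resolvent

variable {f f' : ℝ → ℂ} {c r x₀ l δ : ℝ}

/- With `c = λ_κ`, `r = κ²` and `x₀ = λ_κ^∞`, the "denom", "linearizedDenom" and "hatDenom" below
are `D(l, κ)`, `D₁(l, κ)` and `D̂(l, κ)`. -/

theorem abs_sub_le_norm_hatDenom : |l - x₀| ≤ ‖(x₀ : ℂ) - l - Complex.I * r * (f x₀).im‖ := by
  simpa [abs_sub_comm] using
    Complex.abs_re_le_norm ((x₀ : ℂ) - l - Complex.I * r * (f x₀).im)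

theorem hatDenom_eq (hfix : x₀ = c - r * (f x₀).re) :
    (x₀ : ℂ) - l - Complex.I * r * (f x₀).im = c - l - r * f x₀ := by
  have hx₀ : (x₀ : ℂ) = c - r * (f x₀).re := by exact_mod_cast hfix
  linear_combination hx₀ - (r : ℂ) * Complex.re_add_im (f x₀)

theorem mul_norm_hatDenom_le_norm_denom
    (hf : ∀ z ∈ uIcc x₀ l, HasDerivWithinAt f (f' z) (uIcc x₀ l) z)
    (hcontr : ∀ z ∈ uIcc x₀ l, r * ‖f' z‖ ≤ 1 - δ) (hr : 0 ≤ r)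
    (hfix : x₀ = c - r * (f x₀).re) :
    δ * ‖(x₀ : ℂ) - l - Complex.I * r * (f x₀).im‖ ≤ ‖(c : ℂ) - l - r * f l‖ := by
  have hδ : δ ≤ 1 := by nlinarith [hcontr x₀ left_mem_uIcc, norm_nonneg (f' x₀)]
  refine mul_norm_le_norm_of_norm_sub_le hδ abs_sub_le_norm_hatDenom ?_
  have hmvt := (convex_uIcc x₀ l).norm_image_sub_le_of_norm_hasDerivWithin_le
    (f := fun t => (r : ℂ) * f t) (fun z hz => (hf z hz).const_mul (r : ℂ))
    (fun z hz => by simpa [abs_of_nonneg hr] using hcontr z hz) left_mem_uIcc right_mem_uIcc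
  rw [hatDenom_eq hfix]
  simpa only [sub_sub_sub_cancel_left, Real.norm_eq_abs] using hmvt

theorem mul_norm_hatDenom_le_norm_linearizedDenom (hcontr : r * ‖f' x₀‖ ≤ 1 - δ) (hr : 0 ≤ r)
    (hfix : x₀ = c - r * (f x₀).re) :
    δ * ‖(x₀ : ℂ) - l - Complex.I * r * (f x₀).im‖
      ≤ ‖(c : ℂ) - l - r * f x₀ - r * f' x₀ * (l - x₀)‖ := by
  have hδ : δ ≤ 1 := by nlinarith [norm_nonneg (f' x₀)]
  refine mul_norm_le_norm_of_norm_sub_le hδ abs_sub_le_norm_hatDenom ?_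
  rw [hatDenom_eq hfix, sub_sub_cancel, ← Complex.ofReal_sub, norm_mul, norm_mul,
    Complex.norm_real, Complex.norm_real, Real.norm_of_nonneg hr, Real.norm_eq_abs]
  gcongr

theorem eq_div_sq_of_hasDerivWithinAt_inv_denom {s : Set ℝ} (hs : s ∈ 𝓝 l) {g : ℂ}
    (hfl : HasDerivWithinAt f (f' l) s l) (hd : (c : ℂ) - l - r * f l ≠ 0)
    (hg : HasDerivWithinAt (fun y : ℝ => ((c : ℂ) - y - r * f y)⁻¹) g s l) :
    g = (1 + r * f' l) / ((c : ℂ) - l - r * f l) ^ 2 := by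
  have hD : HasDerivWithinAt (fun y : ℝ => (c : ℂ) - y - r * f y) (-(1 + r * f' l)) s l :=
    (((hasDerivWithinAt_const l s (c : ℂ)).sub (hasDerivWithinAt_id l s).ofReal_comp).sub
      (hfl.const_mul (r : ℂ))).congr_deriv (by push_cast; ring)
  rw [eq_neg_div_sq_of_hasDerivWithinAt_inv hs hD hd hg, neg_neg]

theorem eq_div_sq_of_hasDerivWithinAt_inv_linearizedDenom {s : Set ℝ} (hs : s ∈ 𝓝 l) {g₁ : ℂ}
    (hd₁ : (c : ℂ) - l - r * f x₀ - r * f' x₀ * (l - x₀) ≠ 0)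
    (hg₁ : HasDerivWithinAt
      (fun y : ℝ => ((c : ℂ) - y - r * f x₀ - r * f' x₀ * (y - x₀))⁻¹) g₁ s l) :
    g₁ = (1 + r * f' x₀) / ((c : ℂ) - l - r * f x₀ - r * f' x₀ * (l - x₀)) ^ 2 := by
  have hD : HasDerivWithinAt (fun y : ℝ => (c : ℂ) - y - r * f x₀ - r * f' x₀ * (y - x₀))
      (-(1 + r * f' x₀)) s l :=
    ((((hasDerivWithinAt_const l s (c : ℂ)).sub (hasDerivWithinAt_id l s).ofReal_comp).sub_const
      (r * f x₀)).sub (((hasDerivWithinAt_id l s).ofReal_comp.sub_const (x₀ : ℂ)).const_mul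
        (r * f' x₀))).congr_deriv (by push_cast; ring)
  rw [eq_neg_div_sq_of_hasDerivWithinAt_inv hs hD hd₁ hg₁, neg_neg]

theorem norm_deriv_inv_denom_sub_deriv_inv_linearizedDenom_le {s : Set ℝ} (hs : s ∈ 𝓝 l)
    {g g₁ : ℂ} (hg : HasDerivWithinAt (fun y : ℝ => ((c : ℂ) - y - r * f y)⁻¹) g s l)
    (hg₁ : HasDerivWithinAt
      (fun y : ℝ => ((c : ℂ) - y - r * f x₀ - r * f' x₀ * (y - x₀))⁻¹) g₁ s l)
    (hfl : HasDerivWithinAt f (f' l) s l)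
    (hf : ∀ z ∈ uIcc x₀ l, HasDerivWithinAt f (f' z) (uIcc x₀ l) z)
    (hcontr : ∀ z ∈ uIcc x₀ l, r * ‖f' z‖ ≤ 1 - δ) (hδ : 0 < δ) (hr : 0 ≤ r)
    (hfix : x₀ = c - r * (f x₀).re) (him : 0 < r * (f x₀).im) {L α : ℝ} (hL : 0 ≤ L)
    (hα : 0 ≤ α) (hholder : ∀ z ∈ uIcc x₀ l, ‖f' z - f' x₀‖ ≤ L * |z - x₀| ^ α) :
    ‖g - g₁‖ ≤ (1 / δ ^ 2 + 4 / δ ^ 3) * L * r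
      * ‖((x₀ : ℂ) - l - Complex.I * r * (f x₀).im)⁻¹‖ ^ 2 * |l - x₀| ^ α := by
  set p := ‖(x₀ : ℂ) - l - Complex.I * r * (f x₀).im‖
  have hp : 0 < p := norm_pos_iff.2 fun h => by
    simpa [him.ne'] using congrArg Complex.im h
  have hd : δ * p ≤ _ := mul_norm_hatDenom_le_norm_denom hf hcontr hr hfix
  have hd₁ : δ * p ≤ _ :=
    mul_norm_hatDenom_le_norm_linearizedDenom (l := l) (hcontr x₀ left_mem_uIcc) hr hfix
  have hδp : 0 < δ * p := mul_pos hδ hp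
  rw [eq_div_sq_of_hasDerivWithinAt_inv_denom hs hfl (norm_pos_iff.1 (hδp.trans_le hd)) hg,
    eq_div_sq_of_hasDerivWithinAt_inv_linearizedDenom hs (norm_pos_iff.1 (hδp.trans_le hd₁)) hg₁]
  have huv : ‖(1 + r * f' l) - (1 + r * f' x₀)‖ ≤ r * (L * |l - x₀| ^ α) := by
    rw [add_sub_add_left_eq_sub, ← mul_sub, norm_mul, Complex.norm_real, Real.norm_of_nonneg hr]
    exact mul_le_mul_of_nonneg_left (hholder l right_mem_uIcc) hr
  have hv : ‖1 + r * f' x₀‖ ≤ 2 := by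
    refine (norm_add_le _ _).trans ?_
    rw [norm_one, norm_mul, Complex.norm_real, Real.norm_of_nonneg hr]
    linarith [hcontr x₀ left_mem_uIcc]
  have hdd₁ : ‖((c : ℂ) - l - r * f x₀ - r * f' x₀ * (l - x₀)) - (c - l - r * f l)‖
      ≤ r * (L * |l - x₀| ^ α) * p := by
    have htaylor := norm_sub_sub_smul_le_of_holder hL hα hf hholder
    have hε : |l - x₀| ≤ p := abs_sub_le_norm_hatDenom
    rw [Complex.real_smul] at htaylor
    calc _ = ‖(r : ℂ) * (f l - f x₀ - ((l - x₀ : ℝ) : ℂ) * f' x₀)‖ := by congr 1; push_cast; ring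
      _ ≤ r * (L * |l - x₀| ^ α * |l - x₀|) := by
        rw [norm_mul, Complex.norm_real, Real.norm_of_nonneg hr]
        exact mul_le_mul_of_nonneg_left htaylor hr
      _ ≤ r * (L * |l - x₀| ^ α) * p := by rw [← mul_assoc]; gcongr
  rw [norm_inv]
  calc _ ≤ (1 / δ ^ 2 + 2 * 2 / δ ^ 3) * (r * (L * |l - x₀| ^ α)) / p ^ 2 :=
        norm_div_sq_sub_div_sq_le hp hδ hd hd₁ huv hv hdd₁
    _ = _ := by ring

end Resolvent

theorem stmt_8_general
    (a a₀ b₀ b κ₀ α : ℝ)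
    (ha : a < a₀) (hb : b₀ < b) (hα : α ∈ Ioc (0:ℝ) 1)
    (lam : ℝ → ℝ) (F F' : ℝ → ℝ → ℂ)
    -- (H1): F(·,κ) is C¹ on [a,b] with derivative F'
    (hH1 : ∀ k ∈ Icc (-κ₀) κ₀, ∀ l ∈ Icc a b,
      HasDerivWithinAt (fun x => F x k) (F' l k) (Icc a b) l)
    -- (H1)(b): F' is α-Hölder on [a₀,b₀] uniformly in κ
    (hH1b : ∃ L : ℝ, ∀ k ∈ Icc (-κ₀) κ₀, ∀ l₁ ∈ Icc a₀ b₀, ∀ l₂ ∈ Icc a₀ b₀,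
      ‖F' l₁ k - F' l₂ k‖ ≤ L * |l₁ - l₂| ^ α)
    -- (H2): inf of Im F on [a₀,b₀] is positive
    (hH2 : ∀ k ∈ Icc (-κ₀) κ₀, ∃ c > 0, ∀ l ∈ Icc a₀ b₀, c ≤ (F l k).im)
    -- choice of δ₁ and κ₁
    (δ₁ κ₁ : ℝ)
    (hδ₁ : 0 < δ₁) (hκ₁' : κ₁ ≤ κ₀)
    (hcontr : ∀ l ∈ Icc a₀ b₀, ∀ k ∈ Icc (-κ₀) κ₀, κ₁ ^ 2 * ‖F' l k‖ ≤ 1 - δ₁)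
    -- λ_κ^∞ : the unique solution in [a₀,b₀] of λ = λ_κ − κ² Re F(λ,κ)
    (lamInf : ℝ → ℝ)
    (hfix : ∀ k : ℝ, k ≠ 0 → |k| ≤ κ₁ → lamInf k ∈ Icc a₀ b₀ ∧
      lamInf k = lam k - k ^ 2 * (F (lamInf k) k).re ∧
      (∀ l' ∈ Icc a₀ b₀, l' = lam k - k ^ 2 * (F l' k).re → l' = lamInf k))
    :
    ∀ G G1 Ghat : ℝ → ℝ → ℂ,
      (∀ l k : ℝ, G l k = ((lam k : ℂ) - l - (k : ℂ) ^ 2 * F l k)⁻¹) →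
      (∀ l k : ℝ, G1 l k = ((lam k : ℂ) - l - (k : ℂ) ^ 2 * F (lamInf k) k
          - (k : ℂ) ^ 2 * F' (lamInf k) k * ((l : ℂ) - (lamInf k : ℂ)))⁻¹) →
      (∀ l k : ℝ, Ghat l k = ((lamInf k : ℂ) - l
          - Complex.I * (k : ℂ) ^ 2 * ((F (lamInf k) k).im : ℂ))⁻¹) →
      ∀ Gd G1d : ℝ → ℝ → ℂ,
        (∀ k : ℝ, k ≠ 0 → |k| ≤ κ₁ → ∀ l ∈ Icc a₀ b₀,
          HasDerivWithinAt (fun x => G x k) (Gd l k) (Icc a b) l) →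
        (∀ k : ℝ, k ≠ 0 → |k| ≤ κ₁ → ∀ l ∈ Icc a₀ b₀,
          HasDerivWithinAt (fun x => G1 x k) (G1d l k) (Icc a b) l) →
        ∃ C > 0, ∀ l ∈ Icc a₀ b₀, ∀ k : ℝ, k ≠ 0 → |k| ≤ κ₁ →
          ‖Gd l k - G1d l k‖ ≤ C * k ^ 2 * ‖Ghat l k‖ ^ 2 * |l - lamInf k| ^ α := by
  intro G G1 Ghat hG hG1 hGhat Gd G1d hGd hG1d
  obtain ⟨L, hL⟩ := hH1b
  refine ⟨(1 / δ₁ ^ 2 + 4 / δ₁ ^ 3) * max L 1, by positivity, fun l hl k hk0 hk1 => ?_⟩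
  obtain ⟨hlf, hfixk, -⟩ := hfix k hk0 hk1
  have hk : k ∈ Icc (-κ₀) κ₀ := abs_le.mp (hk1.trans hκ₁')
  have hk2 : k ^ 2 ≤ κ₁ ^ 2 := sq_le_sq' (abs_le.mp hk1).1 (abs_le.mp hk1).2
  have hseg : uIcc (lamInf k) l ⊆ Icc a₀ b₀ := uIcc_subset_Icc hlf hl
  have hsub : Icc a₀ b₀ ⊆ Icc a b := Icc_subset_Icc ha.le hb.le
  obtain ⟨m, hm, hIm⟩ := hH2 k hk
  have hest := norm_deriv_inv_denom_sub_deriv_inv_linearizedDenom_le (c := lam k) (r := k ^ 2)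
    (f := fun x => F x k) (f' := fun x => F' x k) (L := max L 1)
    (Icc_mem_nhds (ha.trans_le hl.1) (hl.2.trans_lt hb))
    (by simpa only [Complex.ofReal_pow, hG] using hGd k hk0 hk1 l hl)
    (by simpa only [Complex.ofReal_pow, hG1] using hG1d k hk0 hk1 l hl)
    (hH1 k hk l (hsub hl)) (fun z hz => (hH1 k hk z (hsub (hseg hz))).mono (hseg.trans hsub))
    (fun z hz => (mul_le_mul_of_nonneg_right hk2 (norm_nonneg _)).trans
      (hcontr z (hseg hz) k hk)) hδ₁ (sq_nonneg k) hfixk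
    (mul_pos (pow_pos (abs_pos.2 hk0) 2 |>.trans_eq (sq_abs k)) (hm.trans_le (hIm _ hlf)))
    (zero_le_one.trans (le_max_right L 1)) hα.1.le
    (fun z hz => (hL k hk z (hseg hz) _ hlf).trans
      (mul_le_mul_of_nonneg_right (le_max_left L 1) (by positivity)))
  simpa only [hGhat, Complex.ofReal_pow] using hest

/-- Lemma 2.9: pointwise bound on ∂_λG − ∂_λG₁. -/
theorem stmt_8
    (a a₀ b₀ b l₀ κ₀ α : ℝ)
    (ha : a < a₀) (hab : a₀ < b₀) (hb : b₀ < b)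
    (hl₀ : l₀ ∈ Ioo a₀ b₀) (hκ₀ : 0 < κ₀) (hα : α ∈ Ioc (0:ℝ) 1)
    (lam : ℝ → ℝ) (F F' : ℝ → ℝ → ℂ)
    -- (H0)(a)
    (hH0a : Tendsto lam (𝓝 0) (𝓝 l₀))
    -- (H0)(b)
    (hH0b : ∃ M : ℝ, ∀ l ∈ Icc a b, ∀ k ∈ Icc (-κ₀) κ₀, ‖F l k‖ ≤ M)
    (hH0c : ContinuousWithinAt (fun p : ℝ × ℝ => F p.1 p.2)
      (Icc a b ×ˢ Icc (-κ₀) κ₀) (l₀, 0))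
    -- (H1): F(·,κ) is C¹ on [a,b] with derivative F'
    (hH1 : ∀ k ∈ Icc (-κ₀) κ₀, ∀ l ∈ Icc a b,
      HasDerivWithinAt (fun x => F x k) (F' l k) (Icc a b) l)
    (hH1cont : ∀ k ∈ Icc (-κ₀) κ₀, ContinuousOn (fun l => F' l k) (Icc a b))
    -- (H1)(a): F' bounded
    (hH1a : ∃ M' : ℝ, ∀ l ∈ Icc a b, ∀ k ∈ Icc (-κ₀) κ₀, ‖F' l k‖ ≤ M')
    -- (H1)(b): F' is α-Hölder on [a₀,b₀] uniformly in κ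
    (hH1b : ∃ L : ℝ, ∀ k ∈ Icc (-κ₀) κ₀, ∀ l₁ ∈ Icc a₀ b₀, ∀ l₂ ∈ Icc a₀ b₀,
      ‖F' l₁ k - F' l₂ k‖ ≤ L * |l₁ - l₂| ^ α)
    -- (H2): inf of Im F on [a₀,b₀] is positive
    (hH2 : ∀ k ∈ Icc (-κ₀) κ₀, ∃ c > 0, ∀ l ∈ Icc a₀ b₀, c ≤ (F l k).im)
    -- choice of δ₁ and κ₁
    (δ₁ κ₁ : ℝ)
    (hδ₁ : 0 < δ₁) (hδ₁' : δ₁ < min (l₀ - a₀) (min (b₀ - l₀) 1))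
    (hκ₁ : 0 < κ₁) (hκ₁' : κ₁ ≤ κ₀)
    (hmap : ∀ k : ℝ, |k| ≤ κ₁ → ∀ l ∈ Icc a₀ b₀,
      lam k - k ^ 2 * (F l k).re ∈ Icc (a₀ + δ₁) (b₀ - δ₁))
    (hcontr : ∀ l ∈ Icc a₀ b₀, ∀ k ∈ Icc (-κ₀) κ₀, κ₁ ^ 2 * ‖F' l k‖ ≤ 1 - δ₁)
    -- D(λ,κ) ≠ 0 on [a,b] for 0 < |κ| ≤ κ₁ (so that G is well defined)
    (hDne : ∀ k : ℝ, k ≠ 0 → |k| ≤ κ₁ → ∀ l ∈ Icc a b,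
      (lam k : ℂ) - (l : ℂ) - (k : ℂ) ^ 2 * F l k ≠ 0)
    -- λ_κ^∞ : the unique solution in [a₀,b₀] of λ = λ_κ − κ² Re F(λ,κ)
    (lamInf : ℝ → ℝ)
    (hfix : ∀ k : ℝ, k ≠ 0 → |k| ≤ κ₁ → lamInf k ∈ Icc a₀ b₀ ∧
      lamInf k = lam k - k ^ 2 * (F (lamInf k) k).re ∧
      (∀ l' ∈ Icc a₀ b₀, l' = lam k - k ^ 2 * (F l' k).re → l' = lamInf k))
    :
    ∀ G G1 Ghat : ℝ → ℝ → ℂ,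
      (∀ l k : ℝ, G l k = ((lam k : ℂ) - l - (k : ℂ) ^ 2 * F l k)⁻¹) →
      (∀ l k : ℝ, G1 l k = ((lam k : ℂ) - l - (k : ℂ) ^ 2 * F (lamInf k) k
          - (k : ℂ) ^ 2 * F' (lamInf k) k * ((l : ℂ) - (lamInf k : ℂ)))⁻¹) →
      (∀ l k : ℝ, Ghat l k = ((lamInf k : ℂ) - l
          - Complex.I * (k : ℂ) ^ 2 * ((F (lamInf k) k).im : ℂ))⁻¹) →
      ∀ Gd G1d : ℝ → ℝ → ℂ,
        (∀ k : ℝ, k ≠ 0 → |k| ≤ κ₁ → ∀ l ∈ Icc a₀ b₀,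
          HasDerivWithinAt (fun x => G x k) (Gd l k) (Icc a b) l) →
        (∀ k : ℝ, k ≠ 0 → |k| ≤ κ₁ → ∀ l ∈ Icc a₀ b₀,
          HasDerivWithinAt (fun x => G1 x k) (G1d l k) (Icc a b) l) →
        ∃ C > 0, ∀ l ∈ Icc a₀ b₀, ∀ k : ℝ, k ≠ 0 → |k| ≤ κ₁ →
          ‖Gd l k - G1d l k‖ ≤ C * k ^ 2 * ‖Ghat l k‖ ^ 2 * |l - lamInf k| ^ α :=
  stmt_8_general a a₀ b₀ b κ₀ α ha hb hα lam F F' hH1 hH1b hH2 δ₁ κ₁ hδ₁ hκ₁' hcontr lamInf hfix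
end

section
/- For every κ ∈ ℝ and every z ∈ ℂ with Im z ≠ 0: ⟨φ, (H_κ − z)⁻¹ φ⟩ = 1 / (λ₀ + κ|⟨φ,ψ⟩|² − z − κ²|⟨φ,ψ⟩|²·𝓕_κ(z)). -/
/-!
Schur complement argument. With `Q = 1 - P` and `A = H_κ - z`, the hypotheses on `S` say that
`S` inverts `QAQ` on the range of `Q`. Then `A (1 - SA) P` is the Feshbach map
`F = PAP - PASAP`, so if `G` inverts `F` on the range of `P`, the operator
`(1 - SA) G (1 - AS) + S` is a right inverse of `A`, and its `P`-`P` corner is `G`.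
For `P = |φ⟩⟨φ|` the Feshbach map is the scalar `⟨φ, Aφ⟩ - ⟨φ, ASAφ⟩` times `P`, and
this scalar is the denominator of the formula. It is nonzero because `A` is invertible:
`H_κ` is self-adjoint and `Im z ≠ 0`.
-/

open InnerProductSpace

section Ring

variable {R : Type*} [Ring R]

def feshbachMap (P A S : R) : R := P * A * P - P * A * S * A * P

def feshbachResolvent (A S G : R) : R := (1 - S * A) * G * (1 - A * S) + S

variable {P A S G : R}

theorem IsIdempotentElem.mul_eq_zero_of_one_sub_mul_eq (hP : IsIdempotentElem P)
    (hQS : (1 - P) * S = S) : P * S = 0 := by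
  rw [← hQS, ← mul_assoc, hP.mul_one_sub_self, zero_mul]

theorem IsIdempotentElem.mul_eq_zero_of_mul_one_sub_eq (hP : IsIdempotentElem P)
    (hSQ : S * (1 - P) = S) : S * P = 0 := by
  rw [← hSQ, mul_assoc, hP.one_sub_mul_self, mul_zero]

theorem mul_one_sub_mul_mul_eq_feshbachMap (hQAS : (1 - P) * A * S = 1 - P) :
    A * ((1 - S * A) * P) = feshbachMap P A S := by
  have hQ : (1 - P) * A * ((1 - S * A) * P) = 0 := by
    calc (1 - P) * A * ((1 - S * A) * P) = (1 - P) * A * P - (1 - P) * A * S * A * P := by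
          noncomm_ring
      _ = 0 := by rw [hQAS]; noncomm_ring
  calc A * ((1 - S * A) * P)
      = P * A * ((1 - S * A) * P) + (1 - P) * A * ((1 - S * A) * P) := by noncomm_ring
    _ = feshbachMap P A S := by rw [hQ, feshbachMap]; noncomm_ring

theorem mul_feshbachResolvent_eq_one (hQAS : (1 - P) * A * S = 1 - P)
    (hFG : feshbachMap P A S * G = P) (hPG : P * G = G) :
    A * feshbachResolvent A S G = 1 := by
  have hAS : A * S = P * A * S + (1 - P) := by rw [← hQAS]; noncomm_ring
  calc A * feshbachResolvent A S G
      = A * ((1 - S * A) * P) * G * (1 - A * S) + A * S := by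
        rw [feshbachResolvent]
        conv_lhs => rw [← hPG]
        noncomm_ring
    _ = P - P * A * S + A * S := by
        rw [mul_one_sub_mul_mul_eq_feshbachMap hQAS, hFG]; noncomm_ring
    _ = 1 := by rw [hAS]; noncomm_ring

theorem mul_feshbachResolvent_mul (hPS : P * S = 0) (hSP : S * P = 0) (hPG : P * G = G)
    (hGP : G * P = G) : P * feshbachResolvent A S G * P = G := by
  calc P * feshbachResolvent A S G * P
      = (P - P * S * A) * G * (P - A * (S * P)) + P * S * P := by
        rw [feshbachResolvent]; noncomm_ring
    _ = G := by rw [hPS, hSP]; simp only [zero_mul, mul_zero, sub_zero, add_zero, hPG, hGP]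

theorem feshbachMap_ne_zero (hP : IsIdempotentElem P) (hPS : P * S = 0)
    (hQAS : (1 - P) * A * S = 1 - P) (hA : IsUnit A) (hP0 : P ≠ 0) : feshbachMap P A S ≠ 0 := by
  intro hF
  rw [← mul_one_sub_mul_mul_eq_feshbachMap hQAS, hA.mul_right_eq_zero] at hF
  apply hP0
  calc P = P * P - P * S * A * P := by rw [hP.eq, hPS]; noncomm_ring
    _ = P * ((1 - S * A) * P) := by noncomm_ring
    _ = 0 := by rw [hF, mul_zero]

theorem mul_inverse_mul_eq_smul {𝕜 : Type*} [Field 𝕜] [Algebra 𝕜 R] {D : 𝕜}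
    (hP : IsIdempotentElem P) (hPS : P * S = 0) (hSP : S * P = 0)
    (hQAS : (1 - P) * A * S = 1 - P) (hA : IsUnit A) (hP0 : P ≠ 0)
    (hF : feshbachMap P A S = D • P) : P * Ring.inverse A * P = D⁻¹ • P := by
  have hD : D ≠ 0 := by
    rintro rfl
    exact feshbachMap_ne_zero hP hPS hQAS hA hP0 (by rw [hF, zero_smul])
  have hPG : P * (D⁻¹ • P) = D⁻¹ • P := by rw [mul_smul_comm, hP.eq]
  have hGP : D⁻¹ • P * P = D⁻¹ • P := by rw [smul_mul_assoc, hP.eq]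
  have hFG : feshbachMap P A S * (D⁻¹ • P) = P := by
    rw [hF, smul_mul_smul_comm, mul_inv_cancel₀ hD, one_smul, hP.eq]
  have hinv : Ring.inverse A = feshbachResolvent A S (D⁻¹ • P) := by
    rw [← mul_one (Ring.inverse A), Ring.inverse_mul_eq_iff_eq_mul _ _ _ hA,
      mul_feshbachResolvent_eq_one hQAS hFG hPG]
  rw [hinv, mul_feshbachResolvent_mul hPS hSP hPG hGP]

theorem one_sub_mul_sub_smul_one_mul_eq {𝕜 : Type*} [CommRing 𝕜] [Algebra 𝕜 R]
    {H : R} {z : 𝕜}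
    (hQS : (1 - P) * S = S) (hS : ((1 - P) * H * (1 - P) - z • 1) * S = 1 - P) :
    (1 - P) * (H - z • 1) * S = 1 - P := by
  calc (1 - P) * (H - z • 1) * S = (1 - P) * H * ((1 - P) * S) - z • S := by
        rw [hQS, mul_sub, sub_mul, mul_smul_comm, mul_one, smul_mul_assoc, hQS]
    _ = ((1 - P) * H * (1 - P) - z • 1) * S := by
        rw [sub_mul ((1 - P) * H * (1 - P)), smul_mul_assoc, one_mul, mul_assoc _ (1 - P)]
    _ = 1 - P := hS

end Ring

section RankOne

variable {𝕜 E : Type*} [RCLike 𝕜] [NormedAddCommGroup E] [InnerProductSpace 𝕜 E]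

theorem rankOne_self_mul_mul_rankOne_self (φ : E) (T : E →L[𝕜] E) :
    rankOne 𝕜 φ φ * T * rankOne 𝕜 φ φ = inner 𝕜 φ (T φ) • rankOne 𝕜 φ φ := by
  ext x
  simp [smul_smul, mul_comm]

theorem feshbachMap_rankOne_self (φ : E) (A S : E →L[𝕜] E) :
    feshbachMap (rankOne 𝕜 φ φ) A S
      = (inner 𝕜 φ (A φ) - inner 𝕜 φ (A (S (A φ)))) • rankOne 𝕜 φ φ := by
  rw [feshbachMap, sub_smul, rankOne_self_mul_mul_rankOne_self,
    show rankOne 𝕜 φ φ * A * S * A * rankOne 𝕜 φ φ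
      = rankOne 𝕜 φ φ * (A * S * A) * rankOne 𝕜 φ φ by noncomm_ring,
    rankOne_self_mul_mul_rankOne_self]
  rfl

end RankOne

section RankOnePerturbation

variable {E : Type*} [NormedAddCommGroup E] [InnerProductSpace ℂ E] [CompleteSpace E]

theorem CStarAlgebra.isUnit_sub_smul_one_of_im_ne_zero {A : Type*} [CStarAlgebra A] {a : A}
    (ha : IsSelfAdjoint a) {z : ℂ} (hz : z.im ≠ 0) : IsUnit (a - z • 1) := by
  have h := (spectrum.notMem_iff.mp fun hmem => hz (ha.im_eq_zero_of_mem_spectrum hmem)).neg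
  rwa [neg_sub, Algebra.algebraMap_eq_smul_one] at h

theorem IsSelfAdjoint.add_smul_rankOne_self {H : E →L[ℂ] E} (hH : IsSelfAdjoint H)
    (κ : ℝ) (ψ : E) : IsSelfAdjoint (H + (κ : ℂ) • rankOne ℂ ψ ψ) :=
  hH.add <| IsSelfAdjoint.smul (Complex.conj_ofReal κ) <|
    ContinuousLinearMap.isSelfAdjoint_iff_isSymmetric.mpr (isSymmetric_rankOne_self ψ)

variable {H₀ : E →L[ℂ] E} {l₀ : ℝ} {φ : E}

theorem inner_add_smul_rankOne_sub_smul_one_apply (hH₀ : IsSelfAdjoint H₀)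
    (heig : H₀ φ = (l₀ : ℂ) • φ) (κ : ℝ) (ψ : E) (z : ℂ) (y : E) :
    inner ℂ φ ((H₀ + (κ : ℂ) • rankOne ℂ ψ ψ - z • 1) y)
      = ((l₀ : ℂ) - z) * inner ℂ φ y + κ * inner ℂ φ ψ * inner ℂ ψ y := by
  have hφH : inner ℂ φ (H₀ y) = (l₀ : ℂ) * inner ℂ φ y := by
    have h := hH₀.isSymmetric φ y
    rw [ContinuousLinearMap.coe_coe, heig, inner_smul_left, Complex.conj_ofReal] at h
    exact h.symm
  simp only [sub_apply, add_apply, smul_apply, rankOne_apply, one_apply_eq_self,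
    inner_sub_right, inner_add_right, inner_smul_right, hφH]
  ring

theorem feshbachMap_rankOne_self_add_smul_rankOne (hH₀ : IsSelfAdjoint H₀)
    (heig : H₀ φ = (l₀ : ℂ) • φ) (hφ : ‖φ‖ = 1) (κ : ℝ) (ψ : E) (z : ℂ) {S : E →L[ℂ] E}
    (hPS : rankOne ℂ φ φ * S = 0) (hSP : S * rankOne ℂ φ φ = 0) :
    feshbachMap (rankOne ℂ φ φ) (H₀ + (κ : ℂ) • rankOne ℂ ψ ψ - z • 1) S
      = ((l₀ : ℂ) + (κ : ℂ) * ((‖(inner ℂ φ ψ : ℂ)‖ : ℝ) : ℂ) ^ 2 - z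
          - (κ : ℂ) ^ 2 * ((‖(inner ℂ φ ψ : ℂ)‖ : ℝ) : ℂ) ^ 2 * inner ℂ ψ (S ψ))
        • rankOne ℂ φ φ := by
  have hφφ : inner ℂ φ φ = (1 : ℂ) := by simp [hφ]
  have hφ0 : φ ≠ 0 := ne_zero_of_norm_ne_zero (hφ ▸ one_ne_zero)
  have hSφ : S φ = 0 := by simpa [hφφ, hφ0] using congr($hSP φ)
  have hφS : ∀ x, inner ℂ φ (S x) = (0 : ℂ) := fun x ↦ by
    simpa [hφ0] using congr(inner ℂ φ ($hPS x))
  have hSAφ : S ((H₀ + (κ : ℂ) • rankOne ℂ ψ ψ - z • 1) φ)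
      = ((κ : ℂ) * inner ℂ ψ φ) • S ψ := by
    simp only [sub_apply, add_apply, smul_apply, rankOne_apply, one_apply_eq_self, heig,
      map_sub, map_add, map_smul, hSφ, smul_zero, zero_add, sub_zero, smul_smul]
  have hsq : inner ℂ φ ψ * inner ℂ ψ φ = ((‖(inner ℂ φ ψ : ℂ)‖ : ℝ) : ℂ) ^ 2 := by
    rw [← inner_conj_symm ψ φ, Complex.mul_conj']
  rw [feshbachMap_rankOne_self, hSAφ, inner_add_smul_rankOne_sub_smul_one_apply hH₀ heig,
    inner_add_smul_rankOne_sub_smul_one_apply hH₀ heig, inner_smul_right, inner_smul_right,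
    hφS, hφφ]
  congr 1
  linear_combination ((κ : ℂ) - (κ : ℂ) ^ 2 * inner ℂ ψ (S ψ)) * hsq

end RankOnePerturbation

theorem stmt_17_general
    {E : Type*} [NormedAddCommGroup E] [InnerProductSpace ℂ E] [CompleteSpace E]
    (H₀ : E →L[ℂ] E) (hH₀ : IsSelfAdjoint H₀)
    (l₀ : ℝ) (φ ψ : E) (hφ : ‖φ‖ = 1)
    (heig : H₀ φ = (l₀ : ℂ) • φ)
    (Hk : ℝ → E →L[ℂ] E)
    (hHk : ∀ κ : ℝ, ∀ x : E, Hk κ x = H₀ x + ((κ : ℂ) * (inner ℂ ψ x : ℂ)) • ψ)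
    (P : E →L[ℂ] E) (hPdef : ∀ x : E, P x = (inner ℂ φ x : ℂ) • φ)
    (κ : ℝ) (z : ℂ) (hz : z.im ≠ 0)
    (S : E →L[ℂ] E)
    (hS1 : S * (1 - P) = S) (hS2 : (1 - P) * S = S)
    (hS3 : ((1 - P) * Hk κ * (1 - P) - z • 1) * S = 1 - P) :
    (inner ℂ φ (Ring.inverse (Hk κ - z • 1) φ) : ℂ)
      = ((l₀ : ℂ) + (κ : ℂ) * ((‖(inner ℂ φ ψ : ℂ)‖ : ℝ) : ℂ) ^ 2 - z
          - (κ : ℂ) ^ 2 * ((‖(inner ℂ φ ψ : ℂ)‖ : ℝ) : ℂ) ^ 2 * (inner ℂ ψ (S ψ) : ℂ))⁻¹ := by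
  obtain rfl : P = rankOne ℂ φ φ := by ext x; simp [hPdef]
  have hHκ : Hk κ = H₀ + (κ : ℂ) • rankOne ℂ ψ ψ := by ext x; simp [hHk, mul_smul]
  rw [hHκ] at hS3 ⊢
  have hP0 : rankOne ℂ φ φ ≠ 0 :=
    have hφ0 : φ ≠ 0 := ne_zero_of_norm_ne_zero (hφ ▸ one_ne_zero)
    rankOne_ne_zero hφ0 hφ0
  have hP := isIdempotentElem_rankOne_self (𝕜 := ℂ) hφ
  have hPS := hP.mul_eq_zero_of_one_sub_mul_eq hS2
  have hSP := hP.mul_eq_zero_of_mul_one_sub_eq hS1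
  have hcorner := mul_inverse_mul_eq_smul hP hPS hSP (one_sub_mul_sub_smul_one_mul_eq hS2 hS3)
    (CStarAlgebra.isUnit_sub_smul_one_of_im_ne_zero (hH₀.add_smul_rankOne_self κ ψ) hz) hP0
    (feshbachMap_rankOne_self_add_smul_rankOne hH₀ heig hφ κ ψ z hPS hSP)
  rw [rankOne_self_mul_mul_rankOne_self] at hcorner
  exact smul_left_injective ℂ hP0 hcorner

/-- The Feshbach–Livsic reduction of the resolvent of the rank-one perturbation
H_κ = H₀ + κ|ψ⟩⟨ψ| to the one-dimensional range of P = |φ⟩⟨φ|: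
⟨φ, (H_κ − z)⁻¹φ⟩ = 1/(λ₀ + κ|⟨φ,ψ⟩|² − z − κ²|⟨φ,ψ⟩|²𝓕_κ(z)), where
𝓕_κ(z) = ⟨ψ, P^⊥(H_κ^⊥ − z)⁻¹P^⊥ψ⟩ = ⟨ψ, Sψ⟩ with S the reduced resolvent
characterized by hS1–hS4. -/
theorem stmt_17
    {E : Type*} [NormedAddCommGroup E] [InnerProductSpace ℂ E] [CompleteSpace E]
    (H₀ : E →L[ℂ] E) (hH₀ : IsSelfAdjoint H₀)
    (l₀ : ℝ) (φ ψ : E) (hφ : ‖φ‖ = 1) (hψ : ‖ψ‖ = 1)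
    (heig : H₀ φ = (l₀ : ℂ) • φ)
    (hsimple : ∀ x : E, H₀ x = (l₀ : ℂ) • x → ∃ c : ℂ, x = c • φ)
    (hov : (inner ℂ φ ψ : ℂ) ≠ 0)
    (Hk : ℝ → E →L[ℂ] E)
    (hHk : ∀ κ : ℝ, ∀ x : E, Hk κ x = H₀ x + ((κ : ℂ) * (inner ℂ ψ x : ℂ)) • ψ)
    (P : E →L[ℂ] E) (hPdef : ∀ x : E, P x = (inner ℂ φ x : ℂ) • φ)
    (κ : ℝ) (z : ℂ) (hz : z.im ≠ 0)
    (S : E →L[ℂ] E)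
    (hS1 : S * (1 - P) = S) (hS2 : (1 - P) * S = S)
    (hS3 : ((1 - P) * Hk κ * (1 - P) - z • 1) * S = 1 - P)
    (hS4 : S * ((1 - P) * Hk κ * (1 - P) - z • 1) * (1 - P) = 1 - P) :
    (inner ℂ φ (Ring.inverse (Hk κ - z • 1) φ) : ℂ)
      = ((l₀ : ℂ) + (κ : ℂ) * ((‖(inner ℂ φ ψ : ℂ)‖ : ℝ) : ℂ) ^ 2 - z
          - (κ : ℂ) ^ 2 * ((‖(inner ℂ φ ψ : ℂ)‖ : ℝ) : ℂ) ^ 2 * (inner ℂ ψ (S ψ) : ℂ))⁻¹ :=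
  stmt_17_general H₀ hH₀ l₀ φ ψ hφ heig Hk hHk P hPdef κ z hz S hS1 hS2 hS3
end
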